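/- arXiv:1508.07627 — 3 statements merged into one kernel-verified Lean document; each statement's English description precedes it below -/
import Mathlib

section
/- Let A be a finite connected multigraph with at least one cycle and let e be an edge of A not belonging to the kernel ⌊A⌋. Then A \ e (delete edge e) has exactly two components, exactly one of which is a tree, and the other component contains ⌊A⌋. -/
open Set

/-- A multigraph on vertex type `V` with edge type `E`: each edge has an
unordered pair of endpoints (loops allowed). -/
structure Multigraph (V : Type*) (E : Type*) where
  inc : E → Sym2 V

namespace Multigraph

variable {V E : Type*} (G : Multigraph V E)

/-- The vertex star `S(x,G)`: the set of edges incident to `x`. -/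
def star (x : V) : Set E := {e | x ∈ G.inc e}

/-- The vertex set of the subgraph `G⟨X⟩` induced by an edge set `X`. -/
def verts (X : Set E) : Set V := {v | ∃ e ∈ X, v ∈ G.inc e}

/-- Degree of `v` in the subgraph with edge set `X` (a loop counts twice). -/
noncomputable def deg (X : Set E) (v : V) : ℕ :=
  {e ∈ X | v ∈ G.inc e}.ncard + {e ∈ X | G.inc e = s(v, v)}.ncard

/-- `Δ(G⟨X⟩) = |X| - |V(G⟨X⟩)|`. -/
noncomputable def delta (X : Set E) : ℤ := (X.ncard : ℤ) - ((G.verts X).ncard : ℤ)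

/-- Adjacency via an edge of `X`. -/
def Adj (X : Set E) (a b : V) : Prop := ∃ e ∈ X, G.inc e = s(a, b)

/-- Reachability in the subgraph with edge set `X`. -/
def Reach (X : Set E) : V → V → Prop := Relation.ReflTransGen (G.Adj X)

/-- The subgraph `G⟨X⟩` is connected. -/
def ConnectedOn (X : Set E) : Prop :=
  ∀ a ∈ G.verts X, ∀ b ∈ G.verts X, G.Reach X a b

/-- The edge set of the component of `G⟨X⟩` containing the edge `e`. -/
def edgeComponent (X : Set E) (e : E) : Set E :=
  {f ∈ X | ∃ a ∈ G.inc e, ∃ b ∈ G.inc f, G.Reach X a b}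

/-- The vertex set of the component of the spanning subgraph `(V, X)` containing `v`. -/
def vertexComponent (X : Set E) (v : V) : Set V := {u | G.Reach X v u}

/-- The set of (vertex sets of) components of the spanning subgraph `(V, X)`. -/
def comps (X : Set E) : Set (Set V) := {W | ∃ v : V, W = G.vertexComponent X v}

/-- The component `W` of the spanning subgraph `(V, X)` is a tree:
it is connected and has one more vertex than edges. -/
def TreeOn (X : Set E) (W : Set V) : Prop :=
  (∀ u ∈ W, ∀ w ∈ W, G.Reach X u w) ∧
  ({f ∈ X | ∀ a ∈ G.inc f, a ∈ W}).ncard + 1 = W.ncard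

/-- The edge set `X` forms a cycle: nonempty, connected, all degrees `2`. -/
def IsCycleSet (X : Set E) : Prop :=
  X.Nonempty ∧ G.ConnectedOn X ∧ ∀ v ∈ G.verts X, G.deg X v = 2

/-- `G⟨X⟩` is a cacti-graph: no isolated vertices, no leaves
(i.e. all degrees at least `2`), and no component is a cycle. -/
def CactiSet (X : Set E) : Prop :=
  (∀ v ∈ G.verts X, 2 ≤ G.deg X v) ∧
  ∀ e ∈ X, ¬ G.IsCycleSet (G.edgeComponent X e)

/-- The circuits of the `k`-circular matroid `M_k(G)`:
edge sets `C` with `Δ(G⟨C⟩) = k` and `G⟨C⟩` a cacti-graph. -/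
def CircuitSet (k : ℕ) (X : Set E) : Prop :=
  G.delta X = (k : ℤ) ∧ G.CactiSet X

/-- Some component of `G⟨X⟩` is a tree. -/
def HasTreeComponent (X : Set E) : Prop :=
  ∃ e ∈ X,
    (G.edgeComponent X e).ncard + 1 = (G.verts (G.edgeComponent X e)).ncard

/-- The edge set of the kernel `⌊G⌋`: the maximal subgraph with
no leaves and no isolated vertices. -/
def kernelE : Set E := ⋃₀ {X : Set E | ∀ v ∈ G.verts X, 2 ≤ G.deg X v}

end Multigraph

namespace Matroid

variable {α : Type*}

/-- A circuit of a matroid: a minimal dependent subset of the ground set. -/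
def Circuit' (M : Matroid α) (C : Set α) : Prop :=
  C ⊆ M.E ∧ ¬ M.Indep C ∧ ∀ x ∈ C, M.Indep (C \ {x})

/-- A cocircuit of `M` is a circuit of the dual matroid `M✶`. -/
def Cocircuit' (M : Matroid α) (K : Set α) : Prop := M✶.Circuit' K

/-- The rank of a (finite) matroid: the common cardinality of its bases. -/
noncomputable def rankN (M : Matroid α) : ℕ :=
  sSup {n | ∃ B, M.IsBase B ∧ B.ncard = n}

/-- The corank `ρ*(M)` of a matroid: the rank of the dual matroid. -/
noncomputable def corankN (M : Matroid α) : ℕ := M✶.rankN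

/-- A matroid is connected if it has no loops, no coloops, and every two
elements of the ground set lie in a common circuit. -/
def ConnectedM (M : Matroid α) : Prop :=
  (∀ e ∈ M.E, M.Indep {e}) ∧ (∀ e ∈ M.E, ∃ B, M.IsBase B ∧ e ∉ B) ∧
  (∀ e ∈ M.E, ∀ f ∈ M.E, ∃ C, M.Circuit' C ∧ e ∈ C ∧ f ∈ C)

end Matroid


section AuxLemmas

namespace Multigraph

variable {V E : Type*} {G : Multigraph V E}

lemma sym2_cases (z : Sym2 V) : ∃ x y, z = s(x, y) :=
  Sym2.ind (fun x y => ⟨x, y, rfl⟩) z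

lemma adj_symm {X : Set E} {a b : V} (h : G.Adj X a b) : G.Adj X b a := by
  obtain ⟨f, hf, hi⟩ := h
  exact ⟨f, hf, by rw [hi, Sym2.eq_swap]⟩

lemma reach_symm {X : Set E} {a b : V} (h : G.Reach X a b) : G.Reach X b a := by
  induction h with
  | refl => exact Relation.ReflTransGen.refl
  | tail _ h2 ih => exact Relation.ReflTransGen.head (adj_symm h2) ih

lemma reach_trans {X : Set E} {a b c : V} (h : G.Reach X a b) (h' : G.Reach X b c) :
    G.Reach X a c := Relation.ReflTransGen.trans h h'

def reachN (G : Multigraph V E) (X : Set E) : ℕ → V → V → Prop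
  | 0, a, b => a = b
  | n+1, a, b => ∃ c, G.Adj X a c ∧ G.reachN X n c b

lemma reachN_trans {X : Set E} {m n : ℕ} {a b c : V} (h : G.reachN X m a b)
    (h' : G.reachN X n b c) : G.reachN X (m + n) a c := by
  induction m generalizing a with
  | zero => rw [show (0 + n) = n by omega]; exact h ▸ h'
  | succ m ih =>
    obtain ⟨d, hd, hr⟩ := h
    rw [show (m + 1 + n) = (m + n) + 1 by omega]
    exact ⟨d, hd, ih hr⟩

lemma reachN_snoc {X : Set E} {n : ℕ} {a b : V} (h : G.reachN X (n+1) a b) :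
    ∃ c, G.reachN X n a c ∧ G.Adj X c b := by
  induction n generalizing a with
  | zero => obtain ⟨c, hc, hr⟩ := h; exact ⟨a, rfl, hr ▸ hc⟩
  | succ m ih =>
    obtain ⟨c, hc, hr⟩ := h
    obtain ⟨d, hd, ha⟩ := ih hr
    exact ⟨d, ⟨c, hc, hd⟩, ha⟩

lemma reach_iff_reachN {X : Set E} {a b : V} : G.Reach X a b ↔ ∃ n, G.reachN X n a b := by
  constructor
  · intro h
    induction h with
    | refl => exact ⟨0, rfl⟩
    | tail _ h2 ih =>
      obtain ⟨n, hn⟩ := ih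
      exact ⟨n + 1, reachN_trans hn ⟨_, h2, rfl⟩⟩
  · rintro ⟨n, hn⟩
    induction n generalizing a with
    | zero => exact hn ▸ Relation.ReflTransGen.refl
    | succ m ih =>
      obtain ⟨c, hc, hr⟩ := hn
      exact Relation.ReflTransGen.head hc (ih hr)

noncomputable def cnt (G : Multigraph V E) (X : Set E) (v : V) : ℕ :=
  {f ∈ X | v ∈ G.inc f}.ncard

lemma cnt_le_deg {X : Set E} {v : V} : G.cnt X v ≤ G.deg X v := Nat.le_add_right _ _

lemma cnt_mono [Fintype E] {X Y : Set E} {v : V} (h : X ⊆ Y) : G.cnt X v ≤ G.cnt Y v :=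
  Set.ncard_le_ncard (fun f hf => ⟨h hf.1, hf.2⟩) (Set.toFinite _)

lemma deg_mono [Fintype E] {X Y : Set E} {v : V} (h : X ⊆ Y) : G.deg X v ≤ G.deg Y v :=
  Nat.add_le_add (Set.ncard_le_ncard (fun f hf => ⟨h hf.1, hf.2⟩) (Set.toFinite _))
    (Set.ncard_le_ncard (fun f hf => ⟨h hf.1, hf.2⟩) (Set.toFinite _))

lemma one_le_cnt [Fintype E] {X : Set E} {v : V} {f : E} (hf : f ∈ X) (hv : v ∈ G.inc f) :
    1 ≤ G.cnt X v :=
  (Set.ncard_pos (Set.toFinite _)).2 ⟨f, hf, hv⟩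

lemma two_le_cnt [Fintype E] {X : Set E} {v : V} {f g : E} (hf : f ∈ X) (hg : g ∈ X)
    (hvf : v ∈ G.inc f) (hvg : v ∈ G.inc g) (hne : f ≠ g) : 2 ≤ G.cnt X v := by
  have : 1 < ({h ∈ X | v ∈ G.inc h} : Set E).ncard :=
    (Set.one_lt_ncard_iff (Set.toFinite _)).2 ⟨f, g, ⟨hf, hvf⟩, ⟨hg, hvg⟩, hne⟩
  exact this

lemma mem_verts_of_mem {X : Set E} {f : E} {v : V} (hf : f ∈ X) (hv : v ∈ G.inc f) :
    v ∈ G.verts X := ⟨f, hf, hv⟩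

lemma verts_mono {X Y : Set E} (h : X ⊆ Y) : G.verts X ⊆ G.verts Y := by
  rintro v ⟨f, hf, hv⟩; exact ⟨f, h hf, hv⟩

end Multigraph

namespace Multigraph
variable {V E : Type*} {G : Multigraph V E}

lemma exists_path_aux [Fintype E] {X : Set E} :
    ∀ n a u, G.reachN X n a u → (∀ m, G.reachN X m a u → n ≤ m) →
    ∃ P : Set E, P ⊆ X ∧
      (∀ v ∈ G.verts P, ∃ i j, G.reachN X i a v ∧ G.reachN X j v u ∧ i + j = n) ∧
      (n = 0 → P = ∅) ∧
      (n ≠ 0 → a ∈ G.verts P ∧ u ∈ G.verts P ∧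
        ∀ v ∈ G.verts P, v ≠ a → v ≠ u → 2 ≤ G.cnt P v) := by
  intro n
  induction n with
  | zero =>
    intro a u _ _
    refine ⟨∅, by simp, ?_, fun _ => rfl, fun h => absurd rfl h⟩
    rintro v ⟨f, hf, -⟩; exact absurd hf (Set.notMem_empty f)
  | succ n ih =>
    intro a u h hmin
    obtain ⟨c, hac, hcu⟩ := h
    have hminc : ∀ m, G.reachN X m c u → n ≤ m := by
      intro m hm
      have := hmin (m + 1) ⟨c, hac, hm⟩; omega
    obtain ⟨g, hgX, hg⟩ := hac
    have hag : a ∈ G.inc g := by rw [hg]; exact Sym2.mem_mk_left a c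
    have hcg : c ∈ G.inc g := by rw [hg]; exact Sym2.mem_mk_right a c
    cases n with
    | zero =>
      -- c = u, single edge path
      have hcu' : c = u := hcu
      have hau : a ≠ c := by
        intro hac'
        have := hmin 0 (hcu' ▸ hac'); omega
      refine ⟨{g}, by simp [hgX], ?_, by simp, fun _ => ?_⟩
      · rintro v ⟨f, hf, hv⟩
        rw [Set.mem_singleton_iff] at hf
        rw [hf, hg, Sym2.mem_iff] at hv
        rcases hv with h1 | h1
        · rw [h1]
          exact ⟨0, 1, rfl, ⟨c, ⟨g, hgX, hg⟩, hcu'⟩, rfl⟩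
        · rw [h1, ← hcu']
          exact ⟨1, 0, ⟨c, ⟨g, hgX, hg⟩, rfl⟩, rfl, rfl⟩
      · refine ⟨⟨g, rfl, hag⟩, ⟨g, rfl, hcu' ▸ hcg⟩, ?_⟩
        rintro v ⟨f, hf, hv⟩ hva hvu
        rw [Set.mem_singleton_iff] at hf
        rw [hf, hg, Sym2.mem_iff] at hv
        rcases hv with h1 | h1
        · exact absurd h1 hva
        · exact absurd (h1.trans hcu') hvu
    | succ m =>
      obtain ⟨P', hP'X, hgeo, -, hdeg⟩ := ih c u hcu hminc
      obtain ⟨hcP, huP, hint⟩ := hdeg (by omega)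
      have haP' : a ∉ G.verts P' := by
        intro ha
        obtain ⟨i, j, -, hju, hij⟩ := hgeo a ha
        have := hmin j hju; omega
      have hgP' : g ∉ P' := fun hgm => haP' ⟨g, hgm, hag⟩
      refine ⟨insert g P', ?_, ?_, by simp, fun _ => ?_⟩
      · rintro f hf
        rcases Set.mem_insert_iff.1 hf with hfg | hf'
        · exact hfg ▸ hgX
        · exact hP'X hf'
      · rintro v ⟨f, hf, hv⟩
        rcases Set.mem_insert_iff.1 hf with hfg | hf'
        · rw [hfg, hg, Sym2.mem_iff] at hv
          rcases hv with h1 | h1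
          · rw [h1]
            exact ⟨0, m + 2, rfl, ⟨c, ⟨g, hgX, hg⟩, hcu⟩, by omega⟩
          · rw [h1]
            exact ⟨1, m + 1, ⟨c, ⟨g, hgX, hg⟩, rfl⟩, hcu, by omega⟩
        · obtain ⟨i, j, hic, hju, hij⟩ := hgeo v ⟨f, hf', hv⟩
          exact ⟨i + 1, j, ⟨c, ⟨g, hgX, hg⟩, hic⟩, hju, by omega⟩
      · refine ⟨⟨g, Set.mem_insert g P', hag⟩,
          (verts_mono (Set.subset_insert g P')) huP, ?_⟩
        rintro v hv hva hvu
        rcases Classical.em (v ∈ G.verts P') with hvP' | hvP'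
        · rcases Classical.em (v = c) with hvc | hvc
          · rw [hvc]
            obtain ⟨g', hg'P, hvg'⟩ := hcP
            exact two_le_cnt (Set.mem_insert g P') (Set.mem_insert_of_mem g hg'P)
              hcg hvg' (fun hh => hgP' (hh ▸ hg'P))
          · exact le_trans (hint v hvP' hvc hvu) (cnt_mono (Set.subset_insert g P'))
        · obtain ⟨f, hf, hvf⟩ := hv
          rcases Set.mem_insert_iff.1 hf with hfg | hf'
          · rw [hfg, hg, Sym2.mem_iff] at hvf
            rcases hvf with h1 | h1
            · exact absurd h1 hva
            · rw [h1] at hvP'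
              exact absurd hcP hvP'
          · exact absurd ⟨f, hf', hvf⟩ hvP'

lemma exists_path [Fintype E] {X : Set E} {a u : V} (h : G.Reach X a u) :
    ∃ P : Set E, P ⊆ X ∧ (∀ v ∈ G.verts P, G.Reach X a v) ∧
      (a = u → P = ∅) ∧
      (a ≠ u → a ∈ G.verts P ∧ u ∈ G.verts P ∧
        ∀ v ∈ G.verts P, v ≠ a → v ≠ u → 2 ≤ G.cnt P v) := by
  obtain ⟨n, hn⟩ := reach_iff_reachN.1 h
  have hne : {n | G.reachN X n a u}.Nonempty := ⟨n, hn⟩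
  obtain ⟨P, h1, h2, h3, h4⟩ := exists_path_aux (sInf {n | G.reachN X n a u}) a u
    (Nat.sInf_mem hne) (fun m hm => Nat.sInf_le hm)
  refine ⟨P, h1, ?_, ?_, ?_⟩
  · intro v hv
    obtain ⟨i, -, hi, -⟩ := h2 v hv
    exact reach_iff_reachN.2 ⟨i, hi⟩
  · intro hau
    exact h3 (Nat.le_antisymm (Nat.sInf_le (show G.reachN X 0 a u from hau)) (Nat.zero_le _))
  · intro hau
    refine h4 ?_
    intro h0
    have := Nat.sInf_mem hne
    rw [h0] at this
    exact hau this

end Multigraph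

namespace Multigraph
variable {V E : Type*} {G : Multigraph V E}

/-- Injection from non-root component vertices to incident edges (via BFS distance). -/
lemma comp_injection [Fintype E] {X : Set E} (S : Set V) :
    ({v | ∃ s ∈ S, G.Reach X s v} \ S).ncard
      ≤ {f ∈ X | ∃ v ∈ {v | ∃ s ∈ S, G.Reach X s v} \ S, v ∈ G.inc f}.ncard := by
  classical
  set W : Set V := {v | ∃ s ∈ S, G.Reach X s v} with hW
  by_cases hWS : (W \ S).Nonempty
  swap
  · rw [Set.not_nonempty_iff_eq_empty] at hWS
    simp [hWS]
  set D : V → ℕ := fun v => sInf {n | ∃ s ∈ S, G.reachN X n s v} with hD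
  have key : ∀ v ∈ W \ S, ∃ f, f ∈ X ∧ v ∈ G.inc f ∧ ∃ c, G.inc f = s(c, v) ∧ D c < D v := by
    intro v hv
    obtain ⟨⟨s0, hs0, hreach⟩, hvS⟩ := hv
    obtain ⟨n, hn⟩ := reach_iff_reachN.1 hreach
    have hne : {n | ∃ s ∈ S, G.reachN X n s v}.Nonempty := ⟨n, s0, hs0, hn⟩
    have hmem := Nat.sInf_mem hne
    have hpos : D v ≠ 0 := by
      intro h0
      have h0' : (0 : ℕ) ∈ {n | ∃ s ∈ S, G.reachN X n s v} := by
        rw [← h0]; exact hmem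
      obtain ⟨s, hs, hr⟩ := h0'
      exact hvS ((show s = v from hr) ▸ hs)
    obtain ⟨s, hs, hr⟩ := hmem
    rcases hm : D v with _ | m
    · exact absurd hm hpos
    · rw [show sInf {n | ∃ s ∈ S, G.reachN X n s v} = D v from rfl, hm] at hr
      obtain ⟨c, hrc, hadj⟩ := reachN_snoc hr
      obtain ⟨f, hfX, hf⟩ := hadj
      refine ⟨f, hfX, by rw [hf]; exact Sym2.mem_mk_right c v, c, hf, ?_⟩
      have hc : D c ≤ m := Nat.sInf_le ⟨s, hs, hrc⟩
      omega
  obtain ⟨v₀, hv₀⟩ := hWS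
  obtain ⟨f₀, -⟩ := key v₀ hv₀
  haveI : Nonempty E := ⟨f₀⟩
  set φ : V → E := fun v => if h : v ∈ W \ S then (key v h).choose else Classical.arbitrary E
    with hφ
  have hspec : ∀ v (h : v ∈ W \ S), φ v ∈ X ∧ v ∈ G.inc (φ v) ∧
      ∃ c, G.inc (φ v) = s(c, v) ∧ D c < D v := by
    intro v h
    rw [hφ]; simp only [dif_pos h]
    exact (key v h).choose_spec
  have hinj : Set.InjOn φ (W \ S) := by
    intro v hv w hw heq
    obtain ⟨-, -, cv, hcv, hdv⟩ := hspec v hv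
    obtain ⟨-, -, cw, hcw, hdw⟩ := hspec w hw
    rw [heq, hcw] at hcv
    rcases Sym2.eq_iff.1 hcv with ⟨-, h2⟩ | ⟨h1, h2⟩
    · exact h2.symm
    · rw [h1] at hdw
      rw [← h2] at hdv
      omega
  calc (W \ S).ncard = (φ '' (W \ S)).ncard := (Set.ncard_image_of_injOn hinj).symm
    _ ≤ _ := by
        apply Set.ncard_le_ncard _ (Set.toFinite _)
        rintro x ⟨v, hv, rfl⟩
        obtain ⟨h1, h2, -⟩ := hspec v hv
        exact ⟨h1, v, hv, h2⟩

/-- Handshake: min degree 2 forces at least as many edges as vertices. -/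
lemma ncard_verts_le_ncard [Fintype V] [Fintype E] {X : Set E}
    (h2 : ∀ v ∈ G.verts X, 2 ≤ G.deg X v) : (G.verts X).ncard ≤ X.ncard := by
  classical
  have hsep : ∀ (p : E → Prop), {f ∈ X | p f}.ncard
      = (X.toFinset.filter (fun f => p f)).card := by
    intro p
    rw [← Set.ncard_coe_finset]
    congr 1
    ext f
    simp
  have edge2 : ∀ f : E, (Finset.univ.filter (fun v => v ∈ G.inc f)).card
      + (Finset.univ.filter (fun v => G.inc f = s(v, v))).card = 2 := by
    intro f
    obtain ⟨x, y, hxy⟩ := sym2_cases (G.inc f)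
    rw [hxy]
    by_cases hxy' : x = y
    · rw [hxy']
      have e1 : (Finset.univ.filter (fun v => v ∈ s(y, y))) = {y} := by
        ext v; simp [Sym2.mem_iff]
      have e2 : (Finset.univ.filter (fun v => s(y, y) = s(v, v))) = {y} := by
        ext v
        simp only [Finset.mem_filter, Finset.mem_univ, true_and, Finset.mem_singleton,
          Sym2.eq_iff]
        constructor
        · rintro (⟨h1, -⟩ | ⟨h1, -⟩) <;> exact h1.symm
        · rintro rfl; left; exact ⟨rfl, rfl⟩
      rw [e1, e2]; simp
    · have e1 : (Finset.univ.filter (fun v => v ∈ s(x, y))) = {x, y} := by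
        ext v; simp [Sym2.mem_iff]
      have e2 : (Finset.univ.filter (fun v => s(x, y) = s(v, v))) = ∅ := by
        ext v
        simp only [Finset.mem_filter, Finset.mem_univ, true_and, Finset.notMem_empty,
          iff_false, Sym2.eq_iff]
        rintro (⟨h1, h2⟩ | ⟨h1, h2⟩) <;> exact hxy' (h1.trans h2.symm)
      rw [e1, e2, Finset.card_pair hxy']
      simp
  have hswap : ∑ v : V, G.deg X v = 2 * X.ncard := by
    unfold deg
    rw [Finset.sum_add_distrib]
    have t1 : ∑ v : V, ({e ∈ X | v ∈ G.inc e} : Set E).ncard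
        = ∑ f ∈ X.toFinset, (Finset.univ.filter (fun v => v ∈ G.inc f)).card := by
      simp_rw [hsep, Finset.card_filter]
      rw [Finset.sum_comm]
      convert rfl
    have t2 : ∑ v : V, ({e ∈ X | G.inc e = s(v, v)} : Set E).ncard
        = ∑ f ∈ X.toFinset, (Finset.univ.filter (fun v => G.inc f = s(v, v))).card := by
      simp_rw [hsep, Finset.card_filter]
      rw [Finset.sum_comm]
      convert rfl
    rw [t1, t2, ← Finset.sum_add_distrib]
    have : ∀ f ∈ X.toFinset, (Finset.univ.filter (fun v => v ∈ G.inc f)).card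
        + (Finset.univ.filter (fun v => G.inc f = s(v, v))).card = 2 := fun f _ => edge2 f
    rw [Finset.sum_congr rfl this, Finset.sum_const, Set.ncard_eq_toFinset_card' X]
    ring
  have hlow : 2 * (G.verts X).ncard ≤ ∑ v : V, G.deg X v := by
    have hsub : (G.verts X).toFinset ⊆ Finset.univ := Finset.subset_univ _
    have h1 : ∑ v ∈ (G.verts X).toFinset, G.deg X v ≤ ∑ v : V, G.deg X v :=
      Finset.sum_le_sum_of_subset hsub
    have h0 : (G.verts X).toFinset.card • 2 ≤ ∑ v ∈ (G.verts X).toFinset, G.deg X v := by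
      apply Finset.card_nsmul_le_sum
      intro v hv
      exact h2 v (by simpa using hv)
    rw [← Set.ncard_eq_toFinset_card'] at h0
    simp only [smul_eq_mul] at h0
    omega
  omega

/-- Leaf stripping: an edge set with at least as many edges as vertices contains a
nonempty subset of minimum degree 2. -/
lemma exists_mindeg2 [Fintype V] [Fintype E] :
    ∀ (k : ℕ) (X : Set E), X.ncard ≤ k → X.Nonempty → (G.verts X).ncard ≤ X.ncard →
    ∃ Y, Y ⊆ X ∧ Y.Nonempty ∧ ∀ v ∈ G.verts Y, 2 ≤ G.deg Y v := by
  intro k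
  induction k with
  | zero =>
    intro X hk hne _
    have := (Set.ncard_pos (Set.toFinite _)).2 hne
    omega
  | succ k ih =>
    intro X hk hne hve
    by_cases hall : ∀ v ∈ G.verts X, 2 ≤ G.deg X v
    · exact ⟨X, subset_rfl, hne, hall⟩
    push_neg at hall
    obtain ⟨v, hv, hdeg⟩ := hall
    obtain ⟨f₀, hf₀X, hvf₀⟩ := hv
    have hcnt1 : ({f ∈ X | v ∈ G.inc f} : Set E).ncard = 1 := by
      have hge : 1 ≤ ({f ∈ X | v ∈ G.inc f} : Set E).ncard :=
        (Set.ncard_pos (Set.toFinite _)).2 ⟨f₀, hf₀X, hvf₀⟩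
      unfold deg at hdeg
      omega
    have hA : {f ∈ X | v ∈ G.inc f} = {f₀} := by
      ext g
      constructor
      · intro hgm
        by_contra hne'
        have : 1 < ({f ∈ X | v ∈ G.inc f} : Set E).ncard :=
          (Set.one_lt_ncard_iff (Set.toFinite _)).2 ⟨g, f₀, hgm, ⟨hf₀X, hvf₀⟩, hne'⟩
        omega
      · rintro rfl
        exact ⟨hf₀X, hvf₀⟩
    have hnl : G.inc f₀ ≠ s(v, v) := by
      intro hloop
      have hge : 1 ≤ ({f ∈ X | G.inc f = s(v, v)} : Set E).ncard :=
        (Set.ncard_pos (Set.toFinite _)).2 ⟨f₀, hf₀X, hloop⟩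
      unfold deg at hdeg
      omega
    obtain ⟨w, hw⟩ := Sym2.mem_iff_exists.1 hvf₀
    have hvw : v ≠ w := by
      intro hvw
      exact hnl (by rw [hw, hvw])
    set X' : Set E := X \ {f₀} with hX'
    have hvX' : v ∉ G.verts X' := by
      rintro ⟨f, ⟨hfX, hff₀⟩, hvf⟩
      have : f ∈ ({f₀} : Set E) := hA ▸ (⟨hfX, hvf⟩ : f ∈ {f ∈ X | v ∈ G.inc f})
      exact hff₀ this
    have hsub : G.verts X' ⊆ G.verts X \ {v} := by
      intro x hx
      refine ⟨verts_mono Set.diff_subset hx, ?_⟩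
      rintro rfl
      exact hvX' hx
    have hvmem : v ∈ G.verts X := ⟨f₀, hf₀X, hvf₀⟩
    have hcard1 : (G.verts X').ncard ≤ (G.verts X).ncard - 1 := by
      have := Set.ncard_le_ncard hsub (Set.toFinite _)
      rw [Set.ncard_diff_singleton_of_mem hvmem] at this
      exact this
    have hXcard : X'.ncard = X.ncard - 1 := Set.ncard_diff_singleton_of_mem hf₀X
    have hvX : 1 ≤ (G.verts X).ncard := (Set.ncard_pos (Set.toFinite _)).2 ⟨v, hvmem⟩
    have hX'ne : X'.Nonempty := by
      rw [Set.nonempty_iff_ne_empty]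
      intro hemp
      have hXsub : X ⊆ {f₀} := by
        intro g hg
        by_contra hg'
        have : g ∈ X' := ⟨hg, hg'⟩
        rw [hemp] at this
        exact this
      have hX1 : X.ncard ≤ 1 := by
        have := Set.ncard_le_ncard hXsub (Set.toFinite _)
        simpa using this
      have h2v : 1 < (G.verts X).ncard := by
        apply (Set.one_lt_ncard_iff (Set.toFinite _)).2
        exact ⟨v, w, hvmem, ⟨f₀, hf₀X, by rw [hw]; exact Sym2.mem_mk_right v w⟩, hvw⟩
      omega
    obtain ⟨Y, hY1, hY2, hY3⟩ := ih X' (by omega) hX'ne (by omega)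
    exact ⟨Y, hY1.trans Set.diff_subset, hY2, hY3⟩

end Multigraph

namespace Multigraph
variable {V E : Type*}

set_option maxHeartbeats 1000000 in
lemma main_aux [Fintype V] [Fintype E] (G : Multigraph V E) (e : E) (a b : V)
    (hab : G.inc e = s(a, b))
    (he : e ∉ G.kernelE)
    (hK2 : ∀ v ∈ G.verts G.kernelE, 2 ≤ G.deg G.kernelE v)
    (hKne : G.kernelE.Nonempty)
    (hbridge : ¬ G.Reach (Set.univ \ {e}) a b)
    (hall : ∀ v : V, G.Reach (Set.univ \ {e}) a v ∨ G.Reach (Set.univ \ {e}) b v)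
    (hside : G.verts G.kernelE ⊆ G.vertexComponent (Set.univ \ {e}) b) :
    ∃ W₁ W₂ : Set V, W₁ ≠ W₂ ∧
      G.comps (Set.univ \ {e}) = {W₁, W₂} ∧
      G.TreeOn (Set.univ \ {e}) W₁ ∧ ¬ G.TreeOn (Set.univ \ {e}) W₂ ∧
      G.verts G.kernelE ⊆ W₂ ∧ (∀ f ∈ G.kernelE, ∀ x ∈ G.inc f, x ∈ W₂) := by
  classical
  set X' : Set E := Set.univ \ {e} with hX'
  set W₁ : Set V := G.vertexComponent X' a with hW₁
  set W₂ : Set V := G.vertexComponent X' b with hW₂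
  have haW₁ : a ∈ W₁ := Relation.ReflTransGen.refl
  have hbW₂ : b ∈ W₂ := Relation.ReflTransGen.refl
  have hdisj : ∀ v, v ∈ W₁ → v ∈ W₂ → False := by
    intro v h1 h2
    exact hbridge (reach_trans h1 (reach_symm h2))
  have hW₁closed : ∀ v w, v ∈ W₁ → G.Reach X' v w → w ∈ W₁ :=
    fun v w h1 h2 => reach_trans h1 h2
  have hW₂closed : ∀ v w, v ∈ W₂ → G.Reach X' v w → w ∈ W₂ :=
    fun v w h1 h2 => reach_trans h1 h2
  have hedge : ∀ (f : E) (v x : V), f ∈ X' → v ∈ G.inc f → x ∈ G.inc f → G.Reach X' v x := by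
    intro f v x hf hv hx
    obtain ⟨p, q, hpq⟩ := sym2_cases (G.inc f)
    rw [hpq, Sym2.mem_iff] at hv hx
    have hadj : G.Adj X' p q := ⟨f, hf, hpq⟩
    have h4 : ∀ y, y = p ∨ y = q → G.Reach X' p y := by
      intro y hy
      rcases hy with h | h
      · rw [h]; exact Relation.ReflTransGen.refl
      · rw [h]; exact Relation.ReflTransGen.single hadj
    rcases hv with h | h
    · rw [h]; exact h4 x hx
    · rw [h]
      exact reach_trans (reach_symm (Relation.ReflTransGen.single hadj)) (h4 x hx)
  have hcompeq : ∀ v w, G.Reach X' v w →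
      G.vertexComponent X' v = G.vertexComponent X' w := by
    intro v w h
    ext u
    constructor
    · intro hu; exact reach_trans (reach_symm h) hu
    · intro hu; exact reach_trans h hu
  have hcomps : G.comps X' = {W₁, W₂} := by
    ext W
    simp only [Set.mem_insert_iff, Set.mem_singleton_iff]
    constructor
    · rintro ⟨v, rfl⟩
      rcases hall v with h | h
      · exact Or.inl (hcompeq a v h).symm
      · exact Or.inr (hcompeq b v h).symm
    · rintro (rfl | rfl)
      · exact ⟨a, rfl⟩
      · exact ⟨b, rfl⟩
  set E₁ : Set E := {f ∈ X' | ∀ x ∈ G.inc f, x ∈ W₁} with hE₁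
  set E₂ : Set E := {f ∈ X' | ∀ x ∈ G.inc f, x ∈ W₂} with hE₂
  have hedgeW₁ : ∀ f ∈ X', ∀ v ∈ G.inc f, v ∈ W₁ → f ∈ E₁ := by
    intro f hf v hv hvW
    exact ⟨hf, fun x hx => hW₁closed v x hvW (hedge f v x hf hv hx)⟩
  have hedgeW₂ : ∀ f ∈ X', ∀ v ∈ G.inc f, v ∈ W₂ → f ∈ E₂ := by
    intro f hf v hv hvW
    exact ⟨hf, fun x hx => hW₂closed v x hvW (hedge f v x hf hv hx)⟩
  -- lower bound for W₁
  have hWcompS : {v | ∃ s ∈ ({a} : Set V), G.Reach X' s v} = W₁ := by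
    ext v
    constructor
    · rintro ⟨s, hs, hr⟩
      rw [Set.mem_singleton_iff] at hs
      rw [hs] at hr
      exact hr
    · intro hv
      exact ⟨a, rfl, hv⟩
  have hinj1 := comp_injection (G := G) (X := X') ({a} : Set V)
  rw [hWcompS] at hinj1
  have hsubE : {f ∈ X' | ∃ v ∈ W₁ \ {a}, v ∈ G.inc f} ⊆ E₁ := by
    rintro f ⟨hf, v, hv, hvf⟩
    exact hedgeW₁ f hf v hvf hv.1
  have h1le : W₁.ncard - 1 ≤ E₁.ncard := by
    have h := hinj1.trans (Set.ncard_le_ncard hsubE (Set.toFinite _))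
    rw [Set.ncard_diff_singleton_of_mem haW₁] at h
    exact h
  have hW₁pos : 1 ≤ W₁.ncard := (Set.ncard_pos (Set.toFinite _)).2 ⟨a, haW₁⟩
  -- upper bound for W₁ (acyclicity)
  have h2le : E₁.ncard + 1 ≤ W₁.ncard := by
    by_contra hcon
    push_neg at hcon
    have hEne : E₁.Nonempty := by
      rw [← Set.ncard_pos (Set.toFinite _)]
      omega
    have hvE : G.verts E₁ ⊆ W₁ := by
      rintro v ⟨f, hf, hv⟩
      exact hf.2 v hv
    have hvle : (G.verts E₁).ncard ≤ E₁.ncard :=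
      le_trans (Set.ncard_le_ncard hvE (Set.toFinite _)) (by omega)
    obtain ⟨Y, hYsub, hYne, hY2⟩ := exists_mindeg2 E₁.ncard E₁ le_rfl hEne hvle
    have hYK : Y ⊆ G.kernelE := Set.subset_sUnion_of_mem hY2
    obtain ⟨f, hfY⟩ := hYne
    obtain ⟨p, q, hpq⟩ := sym2_cases (G.inc f)
    have hpK : p ∈ G.verts G.kernelE := ⟨f, hYK hfY, by rw [hpq]; exact Sym2.mem_mk_left p q⟩
    have hpW₂ : p ∈ W₂ := hside hpK
    have hpW₁ : p ∈ W₁ := (hYsub hfY).2 p (by rw [hpq]; exact Sym2.mem_mk_left p q)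
    exact hdisj p hpW₁ hpW₂
  have htree : G.TreeOn X' W₁ := by
    constructor
    · intro u hu w hw
      exact reach_trans (reach_symm hu) hw
    · show E₁.ncard + 1 = W₁.ncard
      omega
  -- W₂ is not a tree
  have hKsubE₂ : G.kernelE ⊆ E₂ := by
    intro f hf
    refine ⟨⟨Set.mem_univ f, ?_⟩, fun x hx => hside ⟨f, hf, hx⟩⟩
    simp only [Set.mem_singleton_iff]
    rintro rfl
    exact he hf
  have hVKne : (G.verts G.kernelE).Nonempty := by
    obtain ⟨f, hf⟩ := hKne
    obtain ⟨p, q, hpq⟩ := sym2_cases (G.inc f)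
    exact ⟨p, f, hf, by rw [hpq]; exact Sym2.mem_mk_left p q⟩
  have hWcomp2 : {v | ∃ s ∈ G.verts G.kernelE, G.Reach X' s v} = W₂ := by
    ext v
    constructor
    · rintro ⟨s, hs, hr⟩
      exact reach_trans (hside hs) hr
    · intro hv
      obtain ⟨s, hs⟩ := hVKne
      exact ⟨s, hs, reach_trans (reach_symm (hside hs)) hv⟩
  have hinj2 := comp_injection (G := G) (X := X') (G.verts G.kernelE)
  rw [hWcomp2] at hinj2
  have hsubE2 : {f ∈ X' | ∃ v ∈ W₂ \ G.verts G.kernelE, v ∈ G.inc f} ⊆ E₂ \ G.kernelE := by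
    rintro f ⟨hf, v, hv, hvf⟩
    exact ⟨hedgeW₂ f hf v hvf hv.1, fun hfK => hv.2 ⟨f, hfK, hvf⟩⟩
  have hle2 : W₂.ncard ≤ E₂.ncard := by
    have ha2 := hinj2.trans (Set.ncard_le_ncard hsubE2 (Set.toFinite _))
    have hK : (G.verts G.kernelE).ncard ≤ G.kernelE.ncard := ncard_verts_le_ncard hK2
    have hsplit : (W₂ \ G.verts G.kernelE).ncard + (G.verts G.kernelE).ncard = W₂.ncard :=
      Set.ncard_diff_add_ncard_of_subset hside (Set.toFinite _)
    have hsplit2 : (E₂ \ G.kernelE).ncard + G.kernelE.ncard = E₂.ncard :=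
      Set.ncard_diff_add_ncard_of_subset hKsubE₂ (Set.toFinite _)
    omega
  have hnotree : ¬ G.TreeOn X' W₂ := by
    rintro ⟨-, hcount⟩
    have : E₂.ncard + 1 = W₂.ncard := hcount
    omega
  refine ⟨W₁, W₂, ?_, hcomps, htree, hnotree, hside, fun f hf x hx => hside ⟨f, hf, hx⟩⟩
  intro hW
  exact hdisj a haW₁ (hW ▸ haW₁)

end Multigraph

end AuxLemmas

set_option maxHeartbeats 1000000

/-- deleting an edge `e ∉ ⌊A⌋` from a finite connected multigraph
`A` with a cycle leaves exactly two components, exactly one of which is a tree,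
and the other contains the kernel `⌊A⌋`. -/
theorem stmt7 {V E : Type*} [Fintype V] [Fintype E] (G : Multigraph V E)
    (hconn : ∀ a b : V, G.Reach Set.univ a b)
    (hcyc : ∃ X : Set E, G.IsCycleSet X)
    (e : E) (he : e ∉ G.kernelE) :
    ∃ W₁ W₂ : Set V, W₁ ≠ W₂ ∧
      G.comps (Set.univ \ {e}) = {W₁, W₂} ∧
      G.TreeOn (Set.univ \ {e}) W₁ ∧ ¬ G.TreeOn (Set.univ \ {e}) W₂ ∧
      G.verts G.kernelE ⊆ W₂ ∧ (∀ f ∈ G.kernelE, ∀ a ∈ G.inc f, a ∈ W₂) := by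
  classical
  obtain ⟨a, b, hab⟩ := Multigraph.sym2_cases (G.inc e)
  set X' : Set E := Set.univ \ {e} with hX'
  have hK2 : ∀ v ∈ G.verts G.kernelE, 2 ≤ G.deg G.kernelE v := by
    rintro v ⟨f, hf, hv⟩
    obtain ⟨X₀, hX₀, hfX₀⟩ := hf
    exact le_trans (hX₀ v ⟨f, hfX₀, hv⟩) (Multigraph.deg_mono (Set.subset_sUnion_of_mem hX₀))
  have hKne : G.kernelE.Nonempty := by
    obtain ⟨X₀, hne, -, hdeg⟩ := hcyc
    obtain ⟨f, hf⟩ := hne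
    exact ⟨f, Set.subset_sUnion_of_mem (show X₀ ∈ {X : Set E | ∀ v ∈ G.verts X, 2 ≤ G.deg X v}
      from fun v hv => (hdeg v hv).ge) hf⟩
  have hne_ab : a ≠ b := by
    rintro rfl
    apply he
    have hmem : ({e} : Set E) ∈ {X : Set E | ∀ v ∈ G.verts X, 2 ≤ G.deg X v} := by
      rintro v ⟨f, hf, hv⟩
      rw [Set.mem_singleton_iff] at hf
      rw [hf, hab, Sym2.mem_iff] at hv
      have hv' : v = a := by rcases hv with h | h <;> exact h
      rw [hv']
      have e1 : {f ∈ ({e} : Set E) | a ∈ G.inc f} = {e} := by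
        ext g
        constructor
        · rintro ⟨h1, -⟩; exact h1
        · intro h1
          rw [Set.mem_singleton_iff] at h1
          refine ⟨h1, ?_⟩
          rw [h1, hab]
          exact Sym2.mem_mk_left a a
      have e2 : {f ∈ ({e} : Set E) | G.inc f = s(a, a)} = {e} := by
        ext g
        constructor
        · rintro ⟨h1, -⟩; exact h1
        · intro h1
          rw [Set.mem_singleton_iff] at h1
          exact ⟨h1, by rw [h1, hab]⟩
      show 2 ≤ G.deg {e} a
      unfold Multigraph.deg
      rw [e1, e2, Set.ncard_singleton]
    exact Set.subset_sUnion_of_mem hmem rfl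
  have hbridge : ¬ G.Reach X' a b := by
    intro hr
    obtain ⟨P, hPX, -, -, hdeg'⟩ := Multigraph.exists_path hr
    obtain ⟨haP, hbP, hint⟩ := hdeg' hne_ab
    apply he
    have heP : e ∉ P := fun hh => (hPX hh).2 rfl
    have hmem : insert e P ∈ {X : Set E | ∀ v ∈ G.verts X, 2 ≤ G.deg X v} := by
      have cover : ∀ w, w ∈ G.verts P → 2 ≤ G.deg (insert e P) w := by
        intro w hw
        rcases Classical.em (w = a) with h | hwa
        · rw [h]
          obtain ⟨g, hgP, hag⟩ := haP
          exact le_trans (Multigraph.two_le_cnt (Set.mem_insert e P)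
            (Set.mem_insert_of_mem e hgP) (by rw [hab]; exact Sym2.mem_mk_left a b) hag
            (fun hh => heP (by rw [hh]; exact hgP))) Multigraph.cnt_le_deg
        · rcases Classical.em (w = b) with h | hwb
          · rw [h]
            obtain ⟨g, hgP, hbg⟩ := hbP
            exact le_trans (Multigraph.two_le_cnt (Set.mem_insert e P)
              (Set.mem_insert_of_mem e hgP) (by rw [hab]; exact Sym2.mem_mk_right a b) hbg
              (fun hh => heP (by rw [hh]; exact hgP))) Multigraph.cnt_le_deg
          · exact le_trans (le_trans (hint w hw hwa hwb)
              (Multigraph.cnt_mono (Set.subset_insert e P))) Multigraph.cnt_le_deg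
      rintro v ⟨f, hf, hvf⟩
      rcases Set.mem_insert_iff.1 hf with hfe | hfP
      · rw [hfe, hab, Sym2.mem_iff] at hvf
        rcases hvf with h | h
        · exact cover v (by rw [h]; exact haP)
        · exact cover v (by rw [h]; exact hbP)
      · exact cover v ⟨f, hfP, hvf⟩
    exact Set.subset_sUnion_of_mem hmem (Set.mem_insert e P)
  have hstep : ∀ v w, G.Adj Set.univ v w →
      (G.Reach X' a v ∨ G.Reach X' b v) → (G.Reach X' a w ∨ G.Reach X' b w) := by
    rintro v w ⟨g, -, hg⟩ hsd
    by_cases hge : g = e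
    · rw [hge, hab] at hg
      rcases Sym2.eq_iff.1 hg with ⟨h1, h2⟩ | ⟨h1, h2⟩
      · right; rw [← h2]; exact Relation.ReflTransGen.refl
      · left; rw [← h1]; exact Relation.ReflTransGen.refl
    · have hadj : G.Adj X' v w := ⟨g, ⟨Set.mem_univ g, by simpa using hge⟩, hg⟩
      rcases hsd with h | h
      · exact Or.inl (Multigraph.reach_trans h (Relation.ReflTransGen.single hadj))
      · exact Or.inr (Multigraph.reach_trans h (Relation.ReflTransGen.single hadj))
  have hall : ∀ v, (G.Reach X' a v ∨ G.Reach X' b v) := by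
    intro v
    have h := hconn a v
    induction h with
    | refl => exact Or.inl Relation.ReflTransGen.refl
    | tail h1 h2 ih => exact hstep _ _ h2 ih
  have hdich : G.verts G.kernelE ⊆ G.vertexComponent X' a
      ∨ G.verts G.kernelE ⊆ G.vertexComponent X' b := by
    by_contra hcon
    push_neg at hcon
    obtain ⟨hcon1, hcon2⟩ := hcon
    obtain ⟨x, hxK, hxa⟩ := Set.not_subset.1 hcon1
    obtain ⟨y, hyK, hyb⟩ := Set.not_subset.1 hcon2
    have hbx : G.Reach X' b x := (hall x).resolve_left hxa
    have hay : G.Reach X' a y := (hall y).resolve_right hyb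
    obtain ⟨Pa, hPaX, hPar, hPae, hPad⟩ := Multigraph.exists_path hay
    obtain ⟨Pb, hPbX, hPbr, hPbe, hPbd⟩ := Multigraph.exists_path hbx
    apply he
    have hePa : e ∉ Pa := fun hh => (hPaX hh).2 rfl
    have hePb : e ∉ Pb := fun hh => (hPbX hh).2 rfl
    set Y : Set E := insert e (G.kernelE ∪ Pa ∪ Pb) with hYdef
    have hKY : G.kernelE ⊆ Y := fun f hf => Set.mem_insert_of_mem e (Or.inl (Or.inl hf))
    have hPaY : Pa ⊆ Y := fun f hf => Set.mem_insert_of_mem e (Or.inl (Or.inr hf))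
    have hPbY : Pb ⊆ Y := fun f hf => Set.mem_insert_of_mem e (Or.inr hf)
    have hcovK : ∀ v, v ∈ G.verts G.kernelE → 2 ≤ G.deg Y v := by
      intro v hv
      exact le_trans (hK2 v hv) (Multigraph.deg_mono hKY)
    have hcovPa : ∀ v, v ∈ G.verts Pa → v ∉ G.verts G.kernelE → 2 ≤ G.deg Y v := by
      intro v hv hvK
      rcases Classical.em (a = y) with hay' | hay'
      · rw [hPae hay'] at hv
        obtain ⟨f, hf, -⟩ := hv
        exact absurd hf (Set.notMem_empty f)
      · obtain ⟨haPa, hyPa, hintPa⟩ := hPad hay'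
        have hvy : v ≠ y := fun hh => hvK (by rw [hh]; exact hyK)
        rcases Classical.em (v = a) with hva | hva
        · rw [hva]
          obtain ⟨g, hgPa, hag⟩ := haPa
          exact le_trans (Multigraph.two_le_cnt (Set.mem_insert e _) (hPaY hgPa)
            (by rw [hab]; exact Sym2.mem_mk_left a b) hag
            (fun hh => hePa (by rw [hh]; exact hgPa))) Multigraph.cnt_le_deg
        · exact le_trans (le_trans (hintPa v hv hva hvy)
            (Multigraph.cnt_mono hPaY)) Multigraph.cnt_le_deg
    have hcovPb : ∀ v, v ∈ G.verts Pb → v ∉ G.verts G.kernelE → 2 ≤ G.deg Y v := by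
      intro v hv hvK
      rcases Classical.em (b = x) with hbx' | hbx'
      · rw [hPbe hbx'] at hv
        obtain ⟨f, hf, -⟩ := hv
        exact absurd hf (Set.notMem_empty f)
      · obtain ⟨hbPb, hxPb, hintPb⟩ := hPbd hbx'
        have hvx : v ≠ x := fun hh => hvK (by rw [hh]; exact hxK)
        rcases Classical.em (v = b) with hvb | hvb
        · rw [hvb]
          obtain ⟨g, hgPb, hbg⟩ := hbPb
          exact le_trans (Multigraph.two_le_cnt (Set.mem_insert e _) (hPbY hgPb)
            (by rw [hab]; exact Sym2.mem_mk_right a b) hbg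
            (fun hh => hePb (by rw [hh]; exact hgPb))) Multigraph.cnt_le_deg
        · exact le_trans (le_trans (hintPb v hv hvb hvx)
            (Multigraph.cnt_mono hPbY)) Multigraph.cnt_le_deg
    have hmem : Y ∈ {X : Set E | ∀ v ∈ G.verts X, 2 ≤ G.deg X v} := by
      rintro v ⟨f, hf, hvf⟩
      rcases Set.mem_insert_iff.1 hf with hfe | hf'
      · rw [hfe, hab, Sym2.mem_iff] at hvf
        rcases hvf with h | h
        · rcases Classical.em (a ∈ G.verts G.kernelE) with haK | haK
          · exact hcovK v (by rw [h]; exact haK)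
          · have hay' : a ≠ y := fun hh => haK (by rw [hh]; exact hyK)
            obtain ⟨haPa, -, -⟩ := hPad hay'
            exact hcovPa v (by rw [h]; exact haPa) (by rw [h]; exact haK)
        · rcases Classical.em (b ∈ G.verts G.kernelE) with hbK | hbK
          · exact hcovK v (by rw [h]; exact hbK)
          · have hbx' : b ≠ x := fun hh => hbK (by rw [hh]; exact hxK)
            obtain ⟨hbPb, -, -⟩ := hPbd hbx'
            exact hcovPb v (by rw [h]; exact hbPb) (by rw [h]; exact hbK)
      · rcases hf' with (hfK | hfPa) | hfPb
        · exact hcovK v ⟨f, hfK, hvf⟩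
        · rcases Classical.em (v ∈ G.verts G.kernelE) with hvK | hvK
          · exact hcovK v hvK
          · exact hcovPa v ⟨f, hfPa, hvf⟩ hvK
        · rcases Classical.em (v ∈ G.verts G.kernelE) with hvK | hvK
          · exact hcovK v hvK
          · exact hcovPb v ⟨f, hfPb, hvf⟩ hvK
    exact Set.subset_sUnion_of_mem hmem (Set.mem_insert e _)
  rcases hdich with hsideA | hsideB
  · have hab' : G.inc e = s(b, a) := by rw [hab, Sym2.eq_swap]
    have hbridge' : ¬ G.Reach X' b a := fun h => hbridge (Multigraph.reach_symm h)
    have hall' : ∀ v, G.Reach X' b v ∨ G.Reach X' a v := fun v => (hall v).symm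
    exact Multigraph.main_aux G e b a hab' he hK2 hKne hbridge' hall' hsideA
  · exact Multigraph.main_aux G e a b hab he hK2 hKne hbridge hall hsideB
end

section
/- Let A be a finite connected multigraph with at least one cycle and e an edge such that A \ e has two components. If v is a vertex of the kernel ⌊A⌋, then the component of A \ e containing v is not a tree. -/
open Set

section Aux

namespace Multigraph

variable {V E : Type*} {G : Multigraph V E}

lemma sym2_exists_eq {α : Type*} (z : Sym2 α) : ∃ a b, z = s(a, b) := by
  induction z using Sym2.ind with
  | _ a b => exact ⟨a, b, rfl⟩

lemma reach_mono {X Y : Set E} (hXY : X ⊆ Y) {a b : V} (h : G.Reach X a b) :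
    G.Reach Y a b := by
  induction h with
  | refl => exact Relation.ReflTransGen.refl
  | tail _ hadj ih =>
    refine ih.tail ?_
    obtain ⟨f, hf, hi⟩ := hadj
    exact ⟨f, hXY hf, hi⟩

lemma mem_vertexComponent {X : Set E} {u w : V} :
    w ∈ G.vertexComponent X u ↔ G.Reach X u w := Iff.rfl

lemma vertexComponent_eq_of_reach {X : Set E} {u w : V} (h : G.Reach X u w) :
    G.vertexComponent X u = G.vertexComponent X w := by
  ext x
  exact ⟨fun hx => (reach_symm h).trans hx, fun hx => h.trans hx⟩

/-- If `u` is not a vertex of `F`, its component is a singleton. -/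
lemma vertexComponent_eq_singleton {F : Set E} {u : V} (hu : u ∉ G.verts F) :
    G.vertexComponent F u = {u} := by
  apply Set.eq_singleton_iff_unique_mem.mpr
  refine ⟨Relation.ReflTransGen.refl, fun w hw => ?_⟩
  rw [mem_vertexComponent] at hw
  rcases (Relation.ReflTransGen.cases_head hw) with h | ⟨c, hc, _⟩
  · exact h.symm
  · obtain ⟨f, hf, hi⟩ := hc
    exact absurd ⟨f, hf, by rw [hi]; exact Sym2.mem_mk_left u c⟩ hu

/-- The number of components of the spanning subgraph `(V, Z)`. -/
noncomputable def ncomps (G : Multigraph V E) (Z : Set E) : ℕ :=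
  (Set.range (G.vertexComponent Z)).ncard

/-- Splitting reachability across an inserted edge with endpoints `a, b`. -/
lemma reach_insert_split {Z : Set E} {f : E} {a b u w : V}
    (hf : G.inc f = s(a, b)) (h : G.Reach (insert f Z) u w) :
    G.Reach Z u w ∨
      ((G.Reach Z u a ∨ G.Reach Z u b) ∧ (G.Reach Z a w ∨ G.Reach Z b w)) := by
  induction h with
  | refl => exact Or.inl Relation.ReflTransGen.refl
  | @tail x y hux hadj ih =>
    obtain ⟨g, hg, hi⟩ := hadj
    rcases Set.mem_insert_iff.mp hg with hge | hgZ
    · -- g = f : crossing the new edge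
      rw [hge, hf] at hi
      rcases Sym2.eq_iff.mp hi with ⟨hxa, hyb⟩ | ⟨hxb, hya⟩
      · subst hxa; subst hyb
        rcases ih with h1 | ⟨h1, _⟩
        · exact Or.inr ⟨Or.inl h1, Or.inr Relation.ReflTransGen.refl⟩
        · exact Or.inr ⟨h1, Or.inr Relation.ReflTransGen.refl⟩
      · subst hxb; subst hya
        rcases ih with h1 | ⟨h1, _⟩
        · exact Or.inr ⟨Or.inr h1, Or.inl Relation.ReflTransGen.refl⟩
        · exact Or.inr ⟨h1, Or.inl Relation.ReflTransGen.refl⟩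
    · -- g ∈ Z : ordinary step
      have hstep : G.Adj Z x y := ⟨g, hgZ, hi⟩
      rcases ih with h1 | ⟨h1, h2⟩
      · exact Or.inl (h1.tail hstep)
      · refine Or.inr ⟨h1, ?_⟩
        rcases h2 with h2 | h2
        · exact Or.inl (h2.tail hstep)
        · exact Or.inr (h2.tail hstep)

/-- Inserting one edge decreases the number of components by at most one. -/
lemma ncomps_le_insert [Fintype V] (G : Multigraph V E) (Z : Set E) (f : E) :
    G.ncomps Z ≤ G.ncomps (insert f Z) + 1 := by
  classical
  obtain ⟨a, b, hf⟩ := sym2_exists_eq (G.inc f)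
  set h : V → Set V := G.vertexComponent Z with hh
  set g : V → Set V := G.vertexComponent (insert f Z) with hg
  have hsub : Z ⊆ insert f Z := Set.subset_insert f Z
  have key : ∀ u u' : V, h u ≠ h b → h u' ≠ h b → g u = g u' → h u = h u' := by
    intro u u' hub hu'b hguu'
    have hr : G.Reach (insert f Z) u u' := by
      have : u' ∈ g u' := Relation.ReflTransGen.refl
      rw [← hguu'] at this; exact this
    rcases reach_insert_split hf hr with h1 | ⟨h1, h2⟩
    · exact vertexComponent_eq_of_reach h1
    · have hua : G.Reach Z u a := by
        rcases h1 with h1 | h1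
        · exact h1
        · exact absurd (vertexComponent_eq_of_reach h1) hub
      have hau' : G.Reach Z a u' := by
        rcases h2 with h2 | h2
        · exact h2
        · exact absurd (vertexComponent_eq_of_reach (reach_symm h2)) hu'b
      exact vertexComponent_eq_of_reach (hua.trans hau')
  -- the saturation map
  have hkappa : ∀ u : V, {w | ∃ x ∈ h u, G.Reach (insert f Z) x w} = g u := by
    intro u
    ext w
    constructor
    · rintro ⟨x, hx, hxw⟩
      exact (reach_mono hsub hx).trans hxw
    · intro hw
      exact ⟨u, Relation.ReflTransGen.refl, hw⟩
  set kappa : Set V → Set V := fun S => {w | ∃ x ∈ S, G.Reach (insert f Z) x w}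
  -- `kappa` is injective on range h minus the class of b
  have hinj : Set.InjOn kappa (Set.range h \ {h b}) := by
    rintro S ⟨⟨u, rfl⟩, hS⟩ T ⟨⟨u', rfl⟩, hT⟩ hST
    have h1 : kappa (h u) = g u := hkappa u
    have h2 : kappa (h u') = g u' := hkappa u'
    exact key u u' (by simpa using hS) (by simpa using hT) (h1 ▸ h2 ▸ hST)
  have himg : kappa '' (Set.range h \ {h b}) ⊆ Set.range g := by
    rintro S ⟨T, ⟨⟨u, rfl⟩, _⟩, rfl⟩
    exact ⟨u, (hkappa u).symm⟩
  have hcard1 : (Set.range h \ {h b}).ncard ≤ (Set.range g).ncard := by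
    rw [← Set.ncard_image_of_injOn hinj]
    exact Set.ncard_le_ncard himg (Set.toFinite _)
  have : (Set.range h).ncard ≤ (Set.range h \ {h b}).ncard + 1 := by
    have hins : Set.range h ⊆ insert (h b) (Set.range h \ {h b}) := by
      intro S hS
      by_cases hSb : S = h b
      · exact Or.inl hSb
      · exact Or.inr ⟨hS, hSb⟩
    calc (Set.range h).ncard ≤ (insert (h b) (Set.range h \ {h b})).ncard :=
          Set.ncard_le_ncard hins (Set.toFinite _)
      _ ≤ (Set.range h \ {h b}).ncard + 1 := Set.ncard_insert_le _ _
  have e1 : G.ncomps Z = (Set.range h).ncard := rfl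
  have e2 : G.ncomps (insert f Z) = (Set.range g).ncard := rfl
  omega

/-- Adding a set of edges decreases components by at most its cardinality. -/
lemma ncomps_le_union [Fintype V] [Fintype E] (G : Multigraph V E) (F D : Set E) :
    G.ncomps F ≤ G.ncomps (F ∪ D) + D.ncard := by
  classical
  have hD : D.Finite := Set.toFinite D
  refine Set.Finite.induction_on (motive := fun D _ => G.ncomps F ≤ G.ncomps (F ∪ D) + D.ncard)
    D hD (by simp) ?_
  intro f D hfD hDfin ih
  · have h1 : G.ncomps (F ∪ D) ≤ G.ncomps (insert f (F ∪ D)) + 1 :=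
      ncomps_le_insert G (F ∪ D) f
    have h2 : insert f (F ∪ D) = F ∪ insert f D := by
      rw [Set.union_insert]
    have h3 : (insert f D).ncard = D.ncard + 1 :=
      Set.ncard_insert_of_notMem hfD hDfin
    rw [h2] at h1
    omega

lemma ncomps_le_of_subset [Fintype V] [Fintype E] (G : Multigraph V E)
    {F Z : Set E} (hFZ : F ⊆ Z) : G.ncomps F ≤ G.ncomps Z + (Z \ F).ncard := by
  have := ncomps_le_union G F (Z \ F)
  rwa [Set.union_diff_cancel hFZ] at this

/-- Lower bound: components of vertices outside `verts F` are singletons. -/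
lemma ncomps_lower [Fintype V] (G : Multigraph V E) (F : Set E)
    (hne : (G.verts F).Nonempty) :
    Nat.card V + 1 ≤ G.ncomps F + (G.verts F).ncard := by
  classical
  obtain ⟨v0, hv0⟩ := hne
  set h : V → Set V := G.vertexComponent F with hh
  have hsing : ∀ u ∈ (G.verts F)ᶜ, h u = {u} := fun u hu =>
    vertexComponent_eq_singleton hu
  have hsub : insert (h v0) ((fun u => ({u} : Set V)) '' (G.verts F)ᶜ) ⊆ Set.range h := by
    rintro S (rfl | ⟨u, hu, rfl⟩)
    · exact ⟨v0, rfl⟩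
    · exact ⟨u, hsing u hu⟩
  have hnotmem : h v0 ∉ (fun u => ({u} : Set V)) '' (G.verts F)ᶜ := by
    rintro ⟨u, hu, heq⟩
    have hv0m : v0 ∈ h v0 := Relation.ReflTransGen.refl
    rw [← heq] at hv0m
    simp only [Set.mem_singleton_iff] at hv0m
    subst hv0m
    exact hu hv0
  have hinj : Set.InjOn (fun u => ({u} : Set V)) (G.verts F)ᶜ := by
    intro x _ y _ hxy
    simpa using hxy
  have hcard : (insert (h v0) ((fun u => ({u} : Set V)) '' (G.verts F)ᶜ)).ncard
      = ((G.verts F)ᶜ).ncard + 1 := by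
    rw [Set.ncard_insert_of_notMem hnotmem (Set.toFinite _),
      Set.ncard_image_of_injOn hinj]
  have h1 : ((G.verts F)ᶜ).ncard + 1 ≤ G.ncomps F := by
    rw [← hcard]
    exact Set.ncard_le_ncard hsub (Set.toFinite _)
  have h2 : (G.verts F).ncard + ((G.verts F)ᶜ).ncard = Nat.card V :=
    Set.ncard_add_ncard_compl _
  omega

/-- Exact component count for a connected "closed" vertex set `W`. -/
lemma ncomps_connected_closed [Fintype V] (G : Multigraph V E) (Z : Set E)
    (W : Set V) (hWne : W.Nonempty)
    (hclosed : ∀ f ∈ Z, ∀ x ∈ G.inc f, x ∈ W)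
    (hconn : ∀ u ∈ W, ∀ w ∈ W, G.Reach Z u w) :
    G.ncomps Z + W.ncard = Nat.card V + 1 := by
  classical
  obtain ⟨v0, hv0⟩ := hWne
  set h : V → Set V := G.vertexComponent Z with hh
  have hstay : ∀ u w : V, u ∈ W → G.Reach Z u w → w ∈ W := by
    intro u w hu hr
    induction hr with
    | refl => exact hu
    | @tail x y _ hadj ih =>
      obtain ⟨f, hf, hi⟩ := hadj
      exact hclosed f hf y (by rw [hi]; exact Sym2.mem_mk_right x y)
  have hcompW : ∀ u ∈ W, h u = W := by
    intro u hu
    ext w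
    constructor
    · intro hw; exact hstay u w hu hw
    · intro hw; exact hconn u hu w hw
  have hvertsub : G.verts Z ⊆ W := by
    rintro x ⟨f, hf, hx⟩
    exact hclosed f hf x hx
  have hsing : ∀ u ∉ W, h u = {u} := by
    intro u hu
    exact vertexComponent_eq_singleton (fun hmem => hu (hvertsub hmem))
  have hrange : Set.range h = insert W ((fun u => ({u} : Set V)) '' Wᶜ) := by
    ext S
    constructor
    · rintro ⟨u, rfl⟩
      by_cases hu : u ∈ W
      · exact Or.inl (hcompW u hu)
      · exact Or.inr ⟨u, hu, (hsing u hu).symm ▸ rfl⟩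
    · rintro (rfl | ⟨u, hu, rfl⟩)
      · exact ⟨v0, hcompW v0 hv0⟩
      · exact ⟨u, hsing u hu⟩
  have hnotmem : W ∉ (fun u => ({u} : Set V)) '' Wᶜ := by
    rintro ⟨u, hu, heq⟩
    have : u ∈ W := by rw [← heq]; exact rfl
    exact hu this
  have hinj : Set.InjOn (fun u => ({u} : Set V)) Wᶜ := by
    intro x _ y _ hxy; simpa using hxy
  have h2 : W.ncard + Wᶜ.ncard = Nat.card V := Set.ncard_add_ncard_compl _
  have : G.ncomps Z = Wᶜ.ncard + 1 := by
    rw [ncomps, hrange, Set.ncard_insert_of_notMem hnotmem (Set.toFinite _),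
      Set.ncard_image_of_injOn hinj]
  omega

open scoped Classical in
/-- Each edge contributes `2` to the total degree (a loop twice). -/
lemma per_edge_count [Fintype V] (G : Multigraph V E) (g : E) :
    (Finset.univ.filter (fun u : V => u ∈ G.inc g)).card
      + (Finset.univ.filter (fun u : V => G.inc g = s(u, u))).card = 2 := by
  classical
  obtain ⟨c, d, hg⟩ := sym2_exists_eq (G.inc g)
  by_cases hcd : c = d
  · subst hcd
    have h1 : Finset.univ.filter (fun u : V => u ∈ G.inc g) = {c} := by
      ext u; simp [hg, Sym2.mem_iff]
    have h2 : Finset.univ.filter (fun u : V => G.inc g = s(u, u)) = {c} := by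
      ext u
      simp only [Finset.mem_filter, Finset.mem_univ, true_and, Finset.mem_singleton, hg,
        Sym2.eq_iff]
      constructor
      · rintro (⟨h, -⟩ | ⟨h, -⟩) <;> exact h.symm
      · rintro rfl; exact Or.inl ⟨rfl, rfl⟩
    rw [h1, h2]; simp
  · have h1 : Finset.univ.filter (fun u : V => u ∈ G.inc g) = {c, d} := by
      ext u; simp [hg, Sym2.mem_iff]
    have h2 : Finset.univ.filter (fun u : V => G.inc g = s(u, u)) = ∅ := by
      ext u
      simp only [Finset.mem_filter, Finset.mem_univ, true_and, Finset.notMem_empty,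
        iff_false, hg, Sym2.eq_iff]
      rintro (⟨rfl, rfl⟩ | ⟨rfl, rfl⟩) <;> exact hcd rfl
    rw [h1, h2, Finset.card_pair hcd]
    simp

open scoped Classical in
/-- Degree sum formula. -/
lemma deg_sum [Fintype V] [Fintype E] (G : Multigraph V E) (F : Set E) :
    ∑ u : V, G.deg F u = 2 * F.ncard := by
  classical
  have hFfin : F.Finite := Set.toFinite F
  set Ft : Finset E := hFfin.toFinset with hFt
  have hdeg : ∀ u : V, G.deg F u =
      (Ft.filter (fun g => u ∈ G.inc g)).card + (Ft.filter (fun g => G.inc g = s(u, u))).card := by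
    intro u
    have e1 : {e ∈ F | u ∈ G.inc e} = ↑(Ft.filter (fun g => u ∈ G.inc g)) := by
      ext g; simp [hFt, Set.Finite.mem_toFinset, Set.mem_setOf_eq]
    have e2 : {e ∈ F | G.inc e = s(u, u)} = ↑(Ft.filter (fun g => G.inc g = s(u, u))) := by
      ext g; simp [hFt, Set.Finite.mem_toFinset, Set.mem_setOf_eq]
    rw [Multigraph.deg, e1, e2, Set.ncard_coe_finset, Set.ncard_coe_finset]
  have hcardF : F.ncard = Ft.card := by
    rw [hFt, Set.ncard_eq_toFinset_card' F]
    congr 1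
    ext g
    simp [Set.Finite.mem_toFinset, Set.mem_setOf_eq]
  calc ∑ u : V, G.deg F u
      = ∑ u : V, ((Ft.filter (fun g => u ∈ G.inc g)).card
          + (Ft.filter (fun g => G.inc g = s(u, u))).card) := by
        exact Finset.sum_congr rfl (fun u _ => hdeg u)
    _ = ∑ u : V, ∑ g ∈ Ft, ((if u ∈ G.inc g then 1 else 0) + (if G.inc g = s(u, u) then 1 else 0)) := by
        refine Finset.sum_congr rfl (fun u _ => ?_)
        rw [Finset.card_filter, Finset.card_filter, ← Finset.sum_add_distrib]
    _ = ∑ g ∈ Ft, ∑ u : V, ((if u ∈ G.inc g then 1 else 0) + (if G.inc g = s(u, u) then 1 else 0)) :=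
        Finset.sum_comm
    _ = ∑ g ∈ Ft, 2 := by
        refine Finset.sum_congr rfl (fun g _ => ?_)
        rw [Finset.sum_add_distrib]
        have a1 : ∑ u : V, (if u ∈ G.inc g then 1 else 0)
            = (Finset.univ.filter (fun u : V => u ∈ G.inc g)).card :=
          (Finset.card_filter _ _).symm
        have a2 : ∑ u : V, (if G.inc g = s(u, u) then 1 else 0)
            = (Finset.univ.filter (fun u : V => G.inc g = s(u, u))).card :=
          (Finset.card_filter _ _).symm
        rw [a1, a2, per_edge_count]
    _ = 2 * F.ncard := by rw [Finset.sum_const, hcardF]; ring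

lemma two_mul_card_le_sum {V : Type*} {s : Finset V} (d : V → ℕ) (w0 : V)
    (h1 : ∀ u ∈ s, 1 ≤ d u) (h2 : ∀ u ∈ s, u ≠ w0 → 2 ≤ d u) :
    2 * s.card ≤ (∑ u ∈ s, d u) + 1 := by
  classical
  by_cases hw : w0 ∈ s
  · have hsum : ∑ u ∈ s.erase w0, d u + d w0 = ∑ u ∈ s, d u := Finset.sum_erase_add s d hw
    have hb : ∀ u ∈ s.erase w0, 2 ≤ d u := fun u hu =>
      h2 u (Finset.mem_of_mem_erase hu) (Finset.ne_of_mem_erase hu)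
    have hc : (s.erase w0).card • 2 ≤ ∑ u ∈ s.erase w0, d u :=
      Finset.card_nsmul_le_sum _ _ _ hb
    have hd : 1 ≤ d w0 := h1 w0 hw
    have hce : s.card = (s.erase w0).card + 1 := (Finset.card_erase_add_one hw).symm
    simp only [smul_eq_mul] at hc
    omega
  · have hb : ∀ u ∈ s, 2 ≤ d u := fun u hu => h2 u hu (fun h => hw (h ▸ hu))
    have hc : s.card • 2 ≤ ∑ u ∈ s, d u := Finset.card_nsmul_le_sum _ _ _ hb
    simp only [smul_eq_mul] at hc
    omega

/-- If every vertex of `F` has degree at least `2`, except possibly `w0`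
which has degree at least `1`, then `|verts F| ≤ |F|`. -/
lemma verts_ncard_le [Fintype V] [Fintype E] (G : Multigraph V E) (F : Set E) (w0 : V)
    (h1 : ∀ u ∈ G.verts F, 1 ≤ G.deg F u)
    (h2 : ∀ u ∈ G.verts F, u ≠ w0 → 2 ≤ G.deg F u) :
    (G.verts F).ncard ≤ F.ncard := by
  classical
  have hfin : (G.verts F).Finite := Set.toFinite _
  set s : Finset V := hfin.toFinset with hs
  have hmem : ∀ u, u ∈ s ↔ u ∈ G.verts F := fun u => Set.Finite.mem_toFinset _
  have hcard : (G.verts F).ncard = s.card := Set.ncard_eq_toFinset_card _ hfin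
  have key : 2 * s.card ≤ (∑ u ∈ s, G.deg F u) + 1 :=
    two_mul_card_le_sum _ w0 (fun u hu => h1 u ((hmem u).mp hu))
      (fun u hu hne => h2 u ((hmem u).mp hu) hne)
  have hle : ∑ u ∈ s, G.deg F u ≤ ∑ u : V, G.deg F u :=
    Finset.sum_le_sum_of_subset (Finset.subset_univ s)
  have hds := G.deg_sum F
  omega

end Multigraph

end Aux

/-- if `A` is a finite connected multigraph with a cycle, `A \ e`
has two components, and `v` is a kernel vertex, then the component of `A \ e`
containing `v` is not a tree. -/
theorem stmt10 {V E : Type*} [Fintype V] [Fintype E] (G : Multigraph V E)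
    (hconn : ∀ a b : V, G.Reach Set.univ a b)
    (hcyc : ∃ X : Set E, G.IsCycleSet X)
    (e : E) (htwo : (G.comps (Set.univ \ {e})).ncard = 2)
    (v : V) (hv : v ∈ G.verts G.kernelE) :
    ¬ G.TreeOn (Set.univ \ {e}) (G.vertexComponent (Set.univ \ {e}) v) := by
  classical
  intro hT
  set X : Set E := Set.univ \ {e} with hXdef
  set W : Set V := G.vertexComponent X v with hWdef
  obtain ⟨hTconn, hTcount⟩ := hT
  have hmemX : ∀ g : E, g ∈ X ↔ g ≠ e := by
    intro g; simp [hXdef]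
  obtain ⟨a, b, he⟩ := Multigraph.sym2_exists_eq (G.inc e)
  have hvW : v ∈ W := Relation.ReflTransGen.refl
  -- `a` and `b` are not connected in `X`
  have hnotreach : ¬ G.Reach X a b := by
    intro hab
    have hrepl : ∀ u w : V, G.Reach Set.univ u w → G.Reach X u w := by
      intro u w h
      induction h with
      | refl => exact Relation.ReflTransGen.refl
      | @tail x y hux hadj ih =>
        obtain ⟨g, -, hi⟩ := hadj
        by_cases hge : g = e
        · subst hge
          rw [he] at hi
          rcases Sym2.eq_iff.mp hi with ⟨rfl, rfl⟩ | ⟨rfl, rfl⟩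
          · exact ih.trans hab
          · exact ih.trans (Multigraph.reach_symm hab)
        · exact ih.tail ⟨g, (hmemX g).mpr hge, hi⟩
    have hcompuniv : ∀ u : V, G.vertexComponent X u = Set.univ :=
      fun u => Set.eq_univ_of_forall (fun w => hrepl u w (hconn u w))
    have hcomps : G.comps X = {Set.univ} := by
      apply Set.eq_singleton_iff_unique_mem.mpr
      constructor
      · exact ⟨v, (hcompuniv v).symm⟩
      · rintro S ⟨u, rfl⟩; exact hcompuniv u
    rw [hcomps] at htwo
    simp [Set.ncard_singleton] at htwo
  have hab_ne : a ≠ b := fun h => hnotreach (h ▸ Relation.ReflTransGen.refl)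
  have hnotboth : ¬ (a ∈ W ∧ b ∈ W) := by
    rintro ⟨ha, hb⟩
    exact hnotreach ((Multigraph.reach_symm ha).trans hb)
  -- neighbours of vertices of `W` along `X`-edges stay in `W`
  have hWadj : ∀ u, u ∈ W → ∀ y, G.Adj X u y → y ∈ W := by
    intro u hu y hadj
    exact Relation.ReflTransGen.tail hu hadj
  have hWedge : ∀ g ∈ X, ∀ u ∈ W, u ∈ G.inc g → ∀ x ∈ G.inc g, x ∈ W := by
    intro g hg u hu hui x hxi
    obtain ⟨y, hy⟩ := Sym2.mem_iff_exists.mp hui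
    have hyW : y ∈ W := hWadj u hu y ⟨g, hg, hy⟩
    rw [hy] at hxi
    rcases Sym2.mem_iff.mp hxi with rfl | rfl
    · exact hu
    · exact hyW
  -- kernel data
  obtain ⟨f0, hf0k, hvf0⟩ := hv
  obtain ⟨K, hK, hf0K⟩ := hf0k
  have hKdeg : ∀ u ∈ G.verts K, 2 ≤ G.deg K u := hK
  have hvK : v ∈ G.verts K := ⟨f0, hf0K, hvf0⟩
  set F : Set E := {g ∈ K | g ≠ e ∧ ∀ x ∈ G.inc g, x ∈ W} with hFdef
  set EW : Set E := {f ∈ X | ∀ x ∈ G.inc f, x ∈ W} with hEWdef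
  have hFEW : F ⊆ EW := by
    rintro g ⟨hgK, hge, hgW⟩
    exact ⟨(hmemX g).mpr hge, hgW⟩
  have hvertFW : G.verts F ⊆ W := by
    rintro u ⟨g, ⟨hgK, hge, hgW⟩, hui⟩
    exact hgW u hui
  have hvertFK : G.verts F ⊆ G.verts K := by
    rintro u ⟨g, ⟨hgK, -, -⟩, hui⟩
    exact ⟨g, hgK, hui⟩
  have hdeg1 : ∀ u ∈ G.verts F, 1 ≤ G.deg F u := by
    intro u hu
    obtain ⟨g, hgF, hui⟩ := hu
    have hpos : 0 < {e ∈ F | u ∈ G.inc e}.ncard := by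
      rw [Set.ncard_pos (Set.toFinite _)]
      exact ⟨g, hgF, hui⟩
    rw [Multigraph.deg]
    omega
  have hdeg2 : ∀ u ∈ G.verts F, u ∉ G.inc e → 2 ≤ G.deg F u := by
    intro u hu hue
    have huW : u ∈ W := hvertFW hu
    have h2 : 2 ≤ G.deg K u := hKdeg u (hvertFK hu)
    have hsub1 : {g ∈ K | u ∈ G.inc g} ⊆ {g ∈ F | u ∈ G.inc g} := by
      rintro g ⟨hgK, hui⟩
      have hge : g ≠ e := fun h => hue (h ▸ hui)
      exact ⟨⟨hgK, hge, hWedge g ((hmemX g).mpr hge) u huW hui⟩, hui⟩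
    have hsub2 : {g ∈ K | G.inc g = s(u, u)} ⊆ {g ∈ F | G.inc g = s(u, u)} := by
      rintro g ⟨hgK, hgl⟩
      have hui : u ∈ G.inc g := by rw [hgl]; exact Sym2.mem_mk_left u u
      have hge : g ≠ e := fun h => hue (h ▸ hui)
      exact ⟨⟨hgK, hge, hWedge g ((hmemX g).mpr hge) u huW hui⟩, hgl⟩
    have c1 := Set.ncard_le_ncard hsub1 (Set.toFinite _)
    have c2 := Set.ncard_le_ncard hsub2 (Set.toFinite _)
    rw [Multigraph.deg] at h2 ⊢
    omega
  have hvF : v ∈ G.verts F := by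
    have h2 : 2 ≤ G.deg K v := hKdeg v hvK
    by_cases hloop : ∃ g ∈ K, G.inc g = s(v, v)
    · obtain ⟨g, hgK, hgl⟩ := hloop
      have hge : g ≠ e := by
        rintro rfl
        rw [he] at hgl
        rcases Sym2.eq_iff.mp hgl with ⟨rfl, rfl⟩ | ⟨rfl, rfl⟩ <;> exact hab_ne rfl
      have hvi : v ∈ G.inc g := by rw [hgl]; exact Sym2.mem_mk_left v v
      exact ⟨g, ⟨hgK, hge, hWedge g ((hmemX g).mpr hge) v hvW hvi⟩, hvi⟩
    · have hzero : {g ∈ K | G.inc g = s(v, v)} = ∅ := by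
        ext g
        simp only [Set.mem_setOf_eq, Set.mem_empty_iff_false, iff_false, not_and]
        intro hgK hgl
        exact hloop ⟨g, hgK, hgl⟩
      have h2' : 1 < {g ∈ K | v ∈ G.inc g}.ncard := by
        rw [Multigraph.deg, hzero, Set.ncard_empty] at h2
        omega
      obtain ⟨g1, g2, hg1, hg2, hg12⟩ := (Set.one_lt_ncard_iff (Set.toFinite _)).mp h2'
      have hpick : ∃ g, (g ∈ K ∧ v ∈ G.inc g) ∧ g ≠ e := by
        by_cases hg1e : g1 = e
        · exact ⟨g2, hg2, fun h => hg12 (hg1e.trans h.symm)⟩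
        · exact ⟨g1, hg1, hg1e⟩
      obtain ⟨g, ⟨hgK, hvi⟩, hge⟩ := hpick
      exact ⟨g, ⟨hgK, hge, hWedge g ((hmemX g).mpr hge) v hvW hvi⟩, hvi⟩
  obtain ⟨w0, hw0⟩ : ∃ w0 : V, w0 = if a ∈ W then a else b := ⟨_, rfl⟩
  have hexc : ∀ u ∈ G.verts F, u ≠ w0 → u ∉ G.inc e := by
    intro u hu hne hmem
    have huW : u ∈ W := hvertFW hu
    rw [he] at hmem
    rcases Sym2.mem_iff.mp hmem with rfl | rfl
    · refine hne ?_
      rw [hw0, if_pos huW]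
    · by_cases haW : a ∈ W
      · exact hnotboth ⟨haW, huW⟩
      · refine hne ?_
        rw [hw0, if_neg haW]
  have hvcard : (G.verts F).ncard ≤ F.ncard :=
    G.verts_ncard_le F w0 hdeg1 (fun u hu hne => hdeg2 u hu (hexc u hu hne))
  -- component counting
  have hWconnEW : ∀ u ∈ W, ∀ w ∈ W, G.Reach EW u w := by
    have hrestrict : ∀ u, u ∈ W → ∀ w, G.Reach X u w → G.Reach EW u w := by
      intro u hu w h
      induction h with
      | refl => exact Relation.ReflTransGen.refl
      | @tail x y hux hadj ih =>
        have hxW : x ∈ W := Relation.ReflTransGen.trans hu hux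
        have hyW : y ∈ W := hWadj x hxW y hadj
        obtain ⟨g, hgX, hgi⟩ := hadj
        have hgEW : g ∈ EW := by
          refine ⟨hgX, ?_⟩
          intro z hz
          rw [hgi] at hz
          rcases Sym2.mem_iff.mp hz with rfl | rfl
          · exact hxW
          · exact hyW
        exact ih.tail ⟨g, hgEW, hgi⟩
    intro u hu w hw
    exact hrestrict u hu w ((Multigraph.reach_symm hu).trans hw)
  have hEWclosed : ∀ f ∈ EW, ∀ x ∈ G.inc f, x ∈ W := fun f hf => hf.2
  have hupper := G.ncomps_connected_closed EW W ⟨v, hvW⟩ hEWclosed hWconnEW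
  have hlower := G.ncomps_lower F ⟨v, hvF⟩
  have hchain := G.ncomps_le_of_subset hFEW
  have hdiffc : (EW \ F).ncard + F.ncard = EW.ncard :=
    Set.ncard_diff_add_ncard_of_subset hFEW (Set.toFinite _)
  omega
end

section
/- Let G be a finite multigraph, k ≥ 1, x a vertex of G. Suppose M_k(G) is a connected matroid, B is a base of M_k(G), the degree of x in G⟨B⟩ is 1, and e is the unique edge of B incident to x. Then the vertex star S(x,G) equals the fundamental cocircuit K(e,B) of M_k(G); in particular S(x,G) is a cocircuit of M_k(G). -/
open Set

namespace Multigraph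

/-- If `x` lies on `f ∈ C`, `f` is the only edge of `C` at `x`, and `C` is a
cacti set, we get a contradiction (degree `< 2`, or a loop cycle component). -/
lemma key_contra {V E : Type*} (G : Multigraph V E) (C : Set E) (x : V) (f : E)
    (hcac : G.CactiSet C) (hfC : f ∈ C) (hxf : x ∈ G.inc f)
    (huni : ∀ g ∈ C, x ∈ G.inc g → g = f) : False := by
  by_cases hloop : G.inc f = s(x, x)
  · -- the component of `f` is a single loop, which is a cycle
    have hreach : ∀ b, G.Reach C x b → b = x := by
      intro b hb
      induction hb with
      | refl => rfl
      | tail h1 hadj ih =>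
        obtain ⟨g, hgC, hg⟩ := hadj
        rw [ih] at hg
        have hxg : x ∈ G.inc g := by rw [hg]; exact Sym2.mem_mk_left _ _
        have hgf := huni g hgC hxg
        rw [hgf, hloop] at hg
        have := Sym2.eq_iff.mp hg
        tauto
    have hcomp : G.edgeComponent C f = {f} := by
      ext g
      simp only [Multigraph.edgeComponent, Set.mem_setOf_eq, Set.mem_singleton_iff]
      constructor
      · rintro ⟨hgC, a, ha, b, hb, hr⟩
        rw [hloop] at ha
        have hax : a = x := by simpa using ha
        subst hax
        have hbx := hreach b hr
        subst hbx
        exact huni g hgC hb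
      · rintro rfl
        exact ⟨hfC, x, hxf, x, hxf, Relation.ReflTransGen.refl⟩
    apply hcac.2 f hfC
    rw [hcomp]
    have hv : G.verts {f} = {x} := by
      ext v
      simp [Multigraph.verts, hloop, Sym2.mem_iff]
    refine ⟨⟨f, rfl⟩, ?_, ?_⟩
    · intro a ha b hb
      rw [hv, Set.mem_singleton_iff] at ha hb
      subst ha; subst hb
      exact Relation.ReflTransGen.refl
    · intro v hvmem
      rw [hv, Set.mem_singleton_iff] at hvmem
      subst hvmem
      have h1 : {g | g ∈ ({f} : Set E) ∧ v ∈ G.inc g} = {f} := by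
        ext g
        simp only [Set.mem_setOf_eq, Set.mem_singleton_iff]
        constructor
        · rintro ⟨h, -⟩; exact h
        · rintro rfl; exact ⟨rfl, by rw [hloop]; exact Sym2.mem_mk_left _ _⟩
      have h2 : {g | g ∈ ({f} : Set E) ∧ G.inc g = s(v, v)} = {f} := by
        ext g
        simp only [Set.mem_setOf_eq, Set.mem_singleton_iff]
        constructor
        · rintro ⟨h, -⟩; exact h
        · rintro rfl; exact ⟨rfl, hloop⟩
      show ({g | g ∈ ({f} : Set E) ∧ v ∈ G.inc g}).ncard
          + ({g | g ∈ ({f} : Set E) ∧ G.inc g = s(v, v)}).ncard = 2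
      rw [h1, h2, Set.ncard_singleton]
  · -- degree of `x` in `C` is `1 < 2`
    have h2 := hcac.1 x ⟨f, hfC, hxf⟩
    have hA : {g | g ∈ C ∧ x ∈ G.inc g} = {f} := by
      ext g
      simp only [Set.mem_setOf_eq, Set.mem_singleton_iff]
      exact ⟨fun ⟨h1, h2⟩ => huni g h1 h2, by rintro rfl; exact ⟨hfC, hxf⟩⟩
    have hL : {g | g ∈ C ∧ G.inc g = s(x, x)} = (∅ : Set E) := by
      ext g
      simp only [Set.mem_setOf_eq, Set.mem_empty_iff_false, iff_false, not_and]
      intro hgC hgl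
      have hxg : x ∈ G.inc g := by rw [hgl]; exact Sym2.mem_mk_left _ _
      have := huni g hgC hxg
      subst this
      exact hloop hgl
    have hdegC : G.deg C x = 1 := by
      show ({g | g ∈ C ∧ x ∈ G.inc g}).ncard
          + ({g | g ∈ C ∧ G.inc g = s(x, x)}).ncard = 1
      rw [hA, hL, Set.ncard_singleton, Set.ncard_empty]
    rw [hdegC] at h2
    omega

end Multigraph

/-- Every finite dependent set contains a circuit. -/
lemma Matroid.exists_circuit'_subset {α : Type*} (M : Matroid α) (hME : M.E = Set.univ)
    {X : Set α} (hX : X.Finite) (hdep : ¬ M.Indep X) : ∃ C ⊆ X, M.Circuit' C := by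
  have hne : {n | ∃ D, D ⊆ X ∧ ¬ M.Indep D ∧ D.ncard = n}.Nonempty :=
    ⟨X.ncard, X, subset_rfl, hdep, rfl⟩
  obtain ⟨D, hDX, hDdep, hDcard⟩ := Nat.sInf_mem hne
  refine ⟨D, hDX, ?_, hDdep, ?_⟩
  · rw [hME]; exact Set.subset_univ _
  · intro y hy
    by_contra hdy
    have hlt : (D \ {y}).ncard < D.ncard :=
      Set.ncard_diff_singleton_lt_of_mem hy (hX.subset hDX)
    have hle : sInf {n | ∃ D, D ⊆ X ∧ ¬ M.Indep D ∧ D.ncard = n} ≤ (D \ {y}).ncard :=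
      Nat.sInf_le ⟨D \ {y}, Set.diff_subset.trans hDX, hdy, rfl⟩
    omega

/-- if `B` is a base of a connected `M_k(G)`, the degree of `x`
in `G⟨B⟩` is `1`, and `e` is the edge of `B` at `x`, then the star `S(x,G)` is
the fundamental cocircuit `K(e,B)`; in particular it is a cocircuit. -/
theorem stmt14 {V E : Type*} [Fintype V] [Fintype E] (G : Multigraph V E)
    (k : ℕ) (hk : 1 ≤ k) (x : V) (M : Matroid E) (hME : M.E = Set.univ)
    (hMC : ∀ C : Set E, M.Circuit' C ↔ G.CircuitSet k C)
    (hconn : M.ConnectedM) (B : Set E) (hB : M.IsBase B)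
    (hdeg : G.deg B x = 1) (e : E) (heB : e ∈ B) (hex : x ∈ G.inc e) :
    M.Cocircuit' (G.star x) ∧ G.star x ∩ B = {e} := by
  classical
  -- Step 0 : `star x ∩ B = {e}` and `e` is not a loop at `x`.
  have hdeg' : ({f | f ∈ B ∧ x ∈ G.inc f}).ncard
      + ({f | f ∈ B ∧ G.inc f = s(x, x)}).ncard = 1 := hdeg
  have heA : e ∈ {f | f ∈ B ∧ x ∈ G.inc f} := ⟨heB, hex⟩
  have hApos : 0 < ({f | f ∈ B ∧ x ∈ G.inc f}).ncard :=
    (Set.ncard_pos (Set.toFinite _)).mpr ⟨e, heA⟩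
  have hL0 : ({f | f ∈ B ∧ G.inc f = s(x, x)}).ncard = 0 := by omega
  have hA1 : ({f | f ∈ B ∧ x ∈ G.inc f}).ncard = 1 := by omega
  have hLempty : {f | f ∈ B ∧ G.inc f = s(x, x)} = (∅ : Set E) :=
    (Set.ncard_eq_zero).mp hL0
  have hAeq : {f | f ∈ B ∧ x ∈ G.inc f} = {e} := by
    obtain ⟨a, ha⟩ := Set.ncard_eq_one.mp hA1
    rw [ha] at heA ⊢
    rw [Set.mem_singleton_iff] at heA
    rw [heA]
  have hnl : G.inc e ≠ s(x, x) := by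
    intro h
    have : e ∈ {f | f ∈ B ∧ G.inc f = s(x, x)} := ⟨heB, h⟩
    rw [hLempty] at this
    exact this
  have hstarB : G.star x ∩ B = {e} := by
    ext g
    rw [← hAeq]
    simp only [Set.mem_inter_iff, Set.mem_setOf_eq, Multigraph.star]
    tauto
  refine ⟨⟨?_, ?_, ?_⟩, hstarB⟩
  · rw [Matroid.dual_ground, hME]; exact Set.subset_univ _
  · -- the star is dependent in the dual: every base meets it
    intro hind
    rw [Matroid.dual_indep_iff_exists'] at hind
    obtain ⟨-, B', hB', hdisj⟩ := hind
    have heS : e ∈ G.star x := hex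
    have heB' : e ∉ B' := fun h => Set.disjoint_left.mp hdisj heS h
    have hdepI : ¬ M.Indep (insert e B') :=
      (hB'.insert_dep ⟨by rw [hME]; trivial, heB'⟩).not_indep
    obtain ⟨C, hCsub, hC⟩ := M.exists_circuit'_subset hME (Set.toFinite _) hdepI
    have heC : e ∈ C := by
      by_contra h
      refine hC.2.1 (hB'.indep.subset fun g hg => ?_)
      rcases Set.mem_insert_iff.mp (hCsub hg) with rfl | hgB'
      · exact absurd hg h
      · exact hgB'
    have hcac : G.CactiSet C := ((hMC C).mp hC).2
    refine G.key_contra C x e hcac heC hex fun g hgC hxg => ?_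
    rcases Set.mem_insert_iff.mp (hCsub hgC) with rfl | hgB'
    · rfl
    · exact absurd hgB' (Set.disjoint_left.mp hdisj hxg)
  · -- removing any element of the star gives a coindependent set
    intro f hf
    rw [Matroid.dual_indep_iff_exists']
    refine ⟨(Set.diff_subset).trans (by rw [hME]; exact Set.subset_univ _), ?_⟩
    by_cases hfe : f = e
    · subst hfe
      refine ⟨B, hB, Set.disjoint_left.mpr ?_⟩
      rintro g ⟨hgS, hgf⟩ hgB
      exact hgf (by rw [← hstarB]; exact ⟨hgS, hgB⟩)
    · have hfB : f ∉ B := by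
        intro h
        exact hfe (by have : f ∈ G.star x ∩ B := ⟨hf, h⟩; rwa [hstarB] at this)
      have hind : M.Indep (insert f (B \ {e})) := by
        by_contra hdepI
        obtain ⟨C, hCsub, hC⟩ := M.exists_circuit'_subset hME (Set.toFinite _) hdepI
        have hfC : f ∈ C := by
          by_contra h
          refine hC.2.1 (hB.indep.subset fun g hg => ?_)
          rcases Set.mem_insert_iff.mp (hCsub hg) with rfl | hgB
          · exact absurd hg h
          · exact hgB.1
        have hcac : G.CactiSet C := ((hMC C).mp hC).2
        refine G.key_contra C x f hcac hfC hf fun g hgC hxg => ?_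
        rcases Set.mem_insert_iff.mp (hCsub hgC) with rfl | hgB
        · rfl
        · exfalso
          have : g ∈ G.star x ∩ B := ⟨hxg, hgB.1⟩
          rw [hstarB] at this
          exact hgB.2 this
      refine ⟨insert f (B \ {e}), hB.exchange_isBase_of_indep hfB hind,
        Set.disjoint_left.mpr ?_⟩
      rintro g ⟨hgS, hgf⟩ hgI
      rcases Set.mem_insert_iff.mp hgI with rfl | hgB
      · exact hgf rfl
      · have : g ∈ G.star x ∩ B := ⟨hgS, hgB.1⟩
        rw [hstarB] at this
        exact hgB.2 this
end
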